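/- Under the same hypotheses ((y₁,y₂) ∈ B), for every ε > 0 and every k > 0 there exist δ > 0 and n ∈ ℕ such that Sⁿ𝟙_{[δ,1-δ]} ≥ k·𝟙_{[ε,1-ε]} pointwise. -/
import Mathlib


open Set

/-- The transfer-type operator S f(x) = f(x/y₁) + f((x-y₂)/(1-y₂)). -/
noncomputable def zipS (y₁ y₂ : ℝ) (f : ℝ → ℝ) : ℝ → ℝ := fun x =>
  f (x / y₁) + f ((x - y₂) / (1 - y₂))

/-- Indicator of an interval. -/
noncomputable def pind (a b : ℝ) : ℝ → ℝ := Set.indicator (Icc a b) (fun _ => (1:ℝ))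

lemma pind_nonneg (a b x : ℝ) : 0 ≤ pind a b x := by
  unfold pind
  exact Set.indicator_nonneg (fun _ _ => by norm_num) x

lemma pind_apply (a b x : ℝ) : pind a b x = if x ∈ Icc a b then 1 else 0 := by
  unfold pind
  exact Set.indicator_apply _ _ _

lemma pind_mono {a b a' b' : ℝ} (ha : a' ≤ a) (hb : b ≤ b') (x : ℝ) :
    pind a b x ≤ pind a' b' x := by
  rw [pind_apply, pind_apply]
  by_cases h : x ∈ Icc a b
  · rw [if_pos h, if_pos ⟨le_trans ha h.1, le_trans h.2 hb⟩]
  · rw [if_neg h]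
    split <;> norm_num

lemma pind_congr {a b a' b' : ℝ} (u v : ℝ) (h : u ∈ Icc a b ↔ v ∈ Icc a' b') :
    pind a b u = pind a' b' v := by
  rw [pind_apply, pind_apply, if_congr h rfl rfl]

/-- One branch of `zipS` on interval indicators. -/
lemma zipS_pind {y₁ y₂ : ℝ} (h1 : 0 < y₁) (h2 : y₂ < 1) (a b x : ℝ) :
    zipS y₁ y₂ (pind a b) x =
      pind (y₁*a) (y₁*b) x + pind (y₂+(1-y₂)*a) (y₂+(1-y₂)*b) x := by
  have h2' : (0:ℝ) < 1 - y₂ := by linarith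
  unfold zipS
  have e1 : pind a b (x / y₁) = pind (y₁*a) (y₁*b) x := by
    apply pind_congr
    rw [mem_Icc, mem_Icc, le_div_iff₀ h1, div_le_iff₀ h1]
    constructor <;> rintro ⟨u, v⟩ <;> constructor <;>
      nlinarith [mul_comm a y₁, mul_comm b y₁]
  have e2 : pind a b ((x - y₂) / (1 - y₂)) = pind (y₂+(1-y₂)*a) (y₂+(1-y₂)*b) x := by
    apply pind_congr
    rw [mem_Icc, mem_Icc, le_div_iff₀ h2', div_le_iff₀ h2']
    constructor <;> rintro ⟨u, v⟩ <;> constructor <;>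
      nlinarith [mul_comm a (1-y₂), mul_comm b (1-y₂)]
  rw [e1, e2]

lemma zipS_mono {y₁ y₂ : ℝ} {f g : ℝ → ℝ} (h : ∀ x, f x ≤ g x) (x : ℝ) :
    zipS y₁ y₂ f x ≤ zipS y₁ y₂ g x :=
  add_le_add (h _) (h _)

lemma zipS_iter_mono {y₁ y₂ : ℝ} {f g : ℝ → ℝ} (n : ℕ) (h : ∀ x, f x ≤ g x) :
    ∀ x, (zipS y₁ y₂)^[n] f x ≤ (zipS y₁ y₂)^[n] g x := by
  induction n generalizing f g with
  | zero => simpa using h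
  | succ n ih =>
    intro x
    rw [Function.iterate_succ_apply, Function.iterate_succ_apply]
    exact ih (fun y => zipS_mono h y) x

lemma zipS_iter_smul {y₁ y₂ : ℝ} (n : ℕ) (c : ℝ) (f : ℝ → ℝ) :
    (zipS y₁ y₂)^[n] (fun x => c * f x) = fun x => c * (zipS y₁ y₂)^[n] f x := by
  induction n generalizing f with
  | zero => rfl
  | succ n ih =>
    rw [Function.iterate_succ_apply, Function.iterate_succ_apply]
    have : zipS y₁ y₂ (fun x => c * f x) = fun x => c * zipS y₁ y₂ f x := by
      funext x; unfold zipS; ring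
    rw [this, ih]

/-- Covering by a union of two intervals. -/
lemma cover2 {l r a₁ b₁ a₂ b₂ : ℝ}
    (h : ∀ x, x ∈ Icc l r → x ∈ Icc a₁ b₁ ∨ x ∈ Icc a₂ b₂) (x : ℝ) :
    pind l r x ≤ pind a₁ b₁ x + pind a₂ b₂ x := by
  rw [pind_apply]
  by_cases hx : x ∈ Icc l r
  · rw [if_pos hx]
    rcases h x hx with h1 | h1
    · have e1 : pind a₁ b₁ x = 1 := by rw [pind_apply, if_pos h1]
      have := pind_nonneg a₂ b₂ x
      linarith
    · have e1 : pind a₂ b₂ x = 1 := by rw [pind_apply, if_pos h1]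
      have := pind_nonneg a₁ b₁ x
      linarith
  · rw [if_neg hx]
    have := pind_nonneg a₁ b₁ x
    have := pind_nonneg a₂ b₂ x
    linarith

/-- Union/intersection refinement: two intervals dominate the indicator of a
set inside their union plus the indicator of a set inside their intersection. -/
lemma pair_bound {l r l' r' a₁ b₁ a₂ b₂ : ℝ}
    (h : ∀ x, x ∈ Icc l r → x ∈ Icc a₁ b₁ ∨ x ∈ Icc a₂ b₂)
    (h' : ∀ x, x ∈ Icc l' r' → x ∈ Icc a₁ b₁ ∧ x ∈ Icc a₂ b₂) (x : ℝ) :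
    pind l r x + pind l' r' x ≤ pind a₁ b₁ x + pind a₂ b₂ x := by
  by_cases hx' : x ∈ Icc l' r'
  · obtain ⟨m1, m2⟩ := h' x hx'
    have e1 : pind a₁ b₁ x = 1 := by rw [pind_apply, if_pos m1]
    have e2 : pind a₂ b₂ x = 1 := by rw [pind_apply, if_pos m2]
    have u1 : pind l r x ≤ 1 := by
      rw [pind_apply]; split <;> norm_num
    have u2 : pind l' r' x = 1 := by rw [pind_apply, if_pos hx']
    linarith
  · have e : pind l' r' x = 0 := by rw [pind_apply, if_neg hx']
    have := cover2 h x
    linarith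

/-- Covering by a union of three intervals. -/
lemma cover3 {l r a₁ b₁ a₂ b₂ a₃ b₃ : ℝ}
    (h : ∀ x, x ∈ Icc l r → x ∈ Icc a₁ b₁ ∨ x ∈ Icc a₂ b₂ ∨ x ∈ Icc a₃ b₃) (x : ℝ) :
    pind l r x ≤ pind a₁ b₁ x + pind a₂ b₂ x + pind a₃ b₃ x := by
  have n1 := pind_nonneg a₁ b₁ x
  have n2 := pind_nonneg a₂ b₂ x
  have n3 := pind_nonneg a₃ b₃ x
  rw [pind_apply]
  by_cases hx : x ∈ Icc l r
  · rw [if_pos hx]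
    rcases h x hx with h1 | h1 | h1
    · have : pind a₁ b₁ x = 1 := by rw [pind_apply, if_pos h1]
      linarith
    · have : pind a₂ b₂ x = 1 := by rw [pind_apply, if_pos h1]
      linarith
    · have : pind a₃ b₃ x = 1 := by rw [pind_apply, if_pos h1]
      linarith
  · rw [if_neg hx]; linarith


/-- Base step: one application of the two branches to a big interval
[a,b] dominates the next big interval plus the central overlap
interval [y₂+σ, y₁-σ]. -/
lemma key_base {y₁ y₂ σ a b : ℝ}
    (h01 : 0 < y₁) (h11 : y₁ < 1) (h02 : 0 < y₂) (h21 : y₂ < 1)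
    (hσ0 : 0 < σ)
    (ha0 : 0 ≤ a) (hb1 : b ≤ 1)
    (haσ : a ≤ σ) (hbσ : y₁*(1-b) ≤ σ) (hbσ' : (1-y₂)*(1-b) ≤ σ)
    (hconn : y₂ + (1-y₂)*a ≤ y₁*b) (x : ℝ) :
    pind (y₁*a) (y₂+(1-y₂)*b) x + pind (y₂+σ) (y₁-σ) x
      ≤ pind (y₁*a) (y₁*b) x + pind (y₂+(1-y₂)*a) (y₂+(1-y₂)*b) x := by
  have t1 : y₁*a ≤ a := mul_le_of_le_one_left ha0 h11.le
  have t2 : (1-y₂)*a ≤ a := mul_le_of_le_one_left ha0 (by linarith)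
  apply pair_bound
  · intro z hz
    rw [mem_Icc] at hz
    rcases le_or_gt z (y₁*b) with hc | hc
    · left; rw [mem_Icc]; exact ⟨hz.1, hc⟩
    · right; rw [mem_Icc]; exact ⟨by linarith, hz.2⟩
  · intro z hz
    rw [mem_Icc] at hz
    obtain ⟨hz1, hz2⟩ := hz
    constructor <;> rw [mem_Icc] <;> constructor
    · linarith
    · linarith
    · linarith
    · linarith

/-- Inductive step: the four branch images dominate the next big interval
plus the expanded middle interval. -/
lemma key_step {y₁ y₂ σ a b l r : ℝ}
    (h01 : 0 < y₁) (h11 : y₁ < 1) (h02 : 0 < y₂) (h21 : y₂ < 1)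
    (hσ0 : 0 < σ) (hσI : σ ≤ 1)
    (hσ1 : y₂ + σ ≤ y₁ * (y₁ - σ)) (hσ2 : y₂ + (1-y₂)*(y₂+σ) ≤ y₁ - σ)
    (ha0 : 0 ≤ a) (hb1 : b ≤ 1)
    (haσ : a ≤ σ) (hbσ : y₁*(1-b) ≤ σ)
    (hconn : y₂ + (1-y₂)*a ≤ y₁*b)
    (hl0 : 0 ≤ l) (hlL : l ≤ y₂+σ) (hrR : y₁ - σ ≤ r) (hr1 : r ≤ 1) (x : ℝ) :
    pind (y₁*a) (y₂+(1-y₂)*b) x + pind (y₁*l) (y₂+(1-y₂)*r) x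
      ≤ (pind (y₁*a) (y₁*b) x + pind (y₂+(1-y₂)*a) (y₂+(1-y₂)*b) x)
        + (pind (y₁*l) (y₁*r) x + pind (y₂+(1-y₂)*l) (y₂+(1-y₂)*r) x) := by
  have ha1 : a ≤ 1 := le_trans haσ hσI
  have k1 : y₁*a ≤ a := mul_le_of_le_one_left ha0 h11.le
  have k2 : y₂*a ≤ y₂ := mul_le_of_le_one_right h02.le ha1
  have p1 : (0:ℝ) ≤ (1-y₂)*a := mul_nonneg (by linarith) ha0
  have hb0 : 0 ≤ b := by nlinarith
  have k3a : (0:ℝ) ≤ y₂*(1-b) := mul_nonneg h02.le (by linarith)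
  have k3b : (0:ℝ) ≤ b*(1-y₁) := mul_nonneg hb0 (by linarith)
  have first : pind (y₁*a) (y₂+(1-y₂)*b) x + pind (y₂+(1-y₂)*a) (y₁*b) x
      ≤ pind (y₁*a) (y₁*b) x + pind (y₂+(1-y₂)*a) (y₂+(1-y₂)*b) x := by
    apply pair_bound
    · intro z hz
      rw [mem_Icc] at hz
      rcases le_or_gt z (y₁*b) with hc | hc
      · left; rw [mem_Icc]; exact ⟨hz.1, hc⟩
      · right; rw [mem_Icc]; exact ⟨by linarith, hz.2⟩
    · intro z hz
      rw [mem_Icc] at hz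
      obtain ⟨hz1, hz2⟩ := hz
      constructor <;> rw [mem_Icc] <;> constructor
      · linarith
      · exact hz2
      · exact hz1
      · linarith
  have second : pind (y₁*l) (y₂+(1-y₂)*r) x
      ≤ pind (y₁*l) (y₁*r) x + pind (y₂+(1-y₂)*a) (y₁*b) x
        + pind (y₂+(1-y₂)*l) (y₂+(1-y₂)*r) x := by
    apply cover3
    intro z hz
    rw [mem_Icc] at hz
    obtain ⟨hz1, hz2⟩ := hz
    rcases le_or_gt z (y₁*r) with hc | hc
    · left; rw [mem_Icc]; exact ⟨hz1, hc⟩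
    · rcases le_or_gt z (y₁ - σ) with hc2 | hc2
      · right; left; rw [mem_Icc]
        have q0 : (0:ℝ) ≤ y₂*σ := mul_nonneg h02.le hσ0.le
        have q1 : (0:ℝ) ≤ (1-y₂)*(σ-a) := mul_nonneg (by linarith) (by linarith)
        have q2 : (0:ℝ) ≤ y₁*(r-(y₁-σ)) := mul_nonneg h01.le (by linarith)
        constructor
        · linarith
        · linarith
      · right; right; rw [mem_Icc]
        have q3 : (0:ℝ) ≤ (1-y₂)*(y₂+σ-l) := mul_nonneg (by linarith) (by linarith)
        constructor
        · linarith
        · exact hz2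
  have n1 := pind_nonneg (y₁*l) (y₁*r) x
  have n2 := pind_nonneg (y₂+(1-y₂)*l) (y₂+(1-y₂)*r) x
  linarith

set_option maxHeartbeats 1000000 in
theorem zipS_multiplying (y₁ y₂ : ℝ)
    (hy₁ : y₁ ∈ Ioo (0:ℝ) 1) (hy₂ : y₂ ∈ Ioo (0:ℝ) 1)
    (hB₁ : y₂ < y₁ ^ 2) (hB₂ : (2 - y₂) * y₂ < y₁) :
    ∀ ε : ℝ, 0 < ε → ∀ k : ℝ, 0 < k → ∃ δ : ℝ, 0 < δ ∧ ∃ n : ℕ,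
      ∀ x : ℝ, k * indicator (Icc ε (1 - ε)) (fun _ => (1:ℝ)) x ≤
        (zipS y₁ y₂)^[n] (indicator (Icc δ (1 - δ)) (fun _ => (1:ℝ))) x := by
  obtain ⟨h01, h11⟩ := hy₁
  obtain ⟨h02, h21⟩ := hy₂
  intro ε hε k hk
  have hy21 : y₂ < y₁ := by nlinarith
  -- the inner margin σ
  obtain ⟨σ, hσ0, hσ1, hσ2, hσr⟩ :
      ∃ σ : ℝ, 0 < σ ∧ y₂ + σ ≤ y₁ * (y₁ - σ) ∧
        y₂ + (1-y₂)*(y₂+σ) ≤ y₁ - σ ∧ y₂ + σ ≤ y₁ - σ := by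
    refine ⟨min ((y₁^2 - y₂)/2) ((y₁ - (2-y₂)*y₂)/3), ?_, ?_, ?_, ?_⟩
    · apply lt_min <;> nlinarith
    · have h := min_le_left ((y₁^2 - y₂)/2) ((y₁ - (2-y₂)*y₂)/3)
      nlinarith
    · have h := min_le_right ((y₁^2 - y₂)/2) ((y₁ - (2-y₂)*y₂)/3)
      have h0 : 0 < min ((y₁^2 - y₂)/2) ((y₁ - (2-y₂)*y₂)/3) := by
        apply lt_min <;> nlinarith
      nlinarith
    · have h := min_le_right ((y₁^2 - y₂)/2) ((y₁ - (2-y₂)*y₂)/3)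
      nlinarith
  have hσy : y₂ + σ ≤ y₁ := by
    nlinarith [mul_pos h01 (show (0:ℝ) < 1 - y₁ + σ from by linarith)]
  have hσI : σ ≤ 1 := by linarith
  -- the base half-width δ
  obtain ⟨δ, hδ0, hδε, hδhalf, hover⟩ :
      ∃ δ : ℝ, 0 < δ ∧ δ ≤ ε ∧ δ ≤ 1/2 ∧ y₂ + (1-y₂)*δ ≤ y₁*(1-δ) := by
    refine ⟨min ε (min (1/2) ((y₁ - y₂)/4)), ?_, min_le_left _ _, ?_, ?_⟩
    · apply lt_min hε
      apply lt_min <;> [norm_num; linarith]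
    · exact le_trans (min_le_right _ _) (min_le_left _ _)
    · have h1 : min ε (min (1/2) ((y₁ - y₂)/4)) ≤ (y₁-y₂)/4 :=
        le_trans (min_le_right _ _) (min_le_right _ _)
      have h2 : 0 < min ε (min (1/2) ((y₁ - y₂)/4)) := by
        apply lt_min hε
        apply lt_min <;> [norm_num; linarith]
      nlinarith
  have hδ1 : δ ≤ 1 := by linarith
  -- the full-interval expansion lemma
  have full : ∀ n x, pind (y₁^n*δ) (1-(1-y₂)^n*δ) x ≤
      (zipS y₁ y₂)^[n] (pind δ (1-δ)) x := by
    intro n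
    induction n with
    | zero => intro x; simp
    | succ n ih =>
      intro x
      have hpy : y₁^n ≤ 1 := pow_le_one₀ h01.le h11.le
      have hpz : (1-y₂)^n ≤ 1 := pow_le_one₀ (by linarith) (by linarith)
      have step1 : zipS y₁ y₂ (pind (y₁^n*δ) (1-(1-y₂)^n*δ)) x ≤
          (zipS y₁ y₂)^[n+1] (pind δ (1-δ)) x := by
        rw [Function.iterate_succ_apply']
        exact zipS_mono ih x
      refine le_trans ?_ step1
      rw [zipS_pind h01 h21]
      apply cover2
      intro z hz
      rw [mem_Icc] at hz
      have e1 : y₁^n*δ ≤ δ := mul_le_of_le_one_left hδ0.le hpy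
      have e2 : (1-y₂)^n*δ ≤ δ := mul_le_of_le_one_left hδ0.le hpz
      have c1 : (1-y₂)*(y₁^n*δ) ≤ (1-y₂)*δ :=
        mul_le_mul_of_nonneg_left e1 (by linarith)
      have c2 : y₁*((1-y₂)^n*δ) ≤ y₁*δ := mul_le_mul_of_nonneg_left e2 h01.le
      have hconn : y₂ + (1-y₂)*(y₁^n*δ) ≤ y₁*(1-(1-y₂)^n*δ) := by linarith
      have hp1 : y₁^(n+1)*δ = y₁*(y₁^n*δ) := by ring
      have hp2 : 1-(1-y₂)^(n+1)*δ = y₂+(1-y₂)*(1-(1-y₂)^n*δ) := by ring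
      rcases le_or_gt z (y₁*(1-(1-y₂)^n*δ)) with hc | hc
      · left; rw [mem_Icc]
        exact ⟨by linarith [hz.1, hp1.le], hc⟩
      · right; rw [mem_Icc]
        exact ⟨by linarith, by linarith [hz.2, hp2.ge]⟩
  -- choose n₀ so that the overlap interval is large
  obtain ⟨m1, hm1⟩ := exists_pow_lt_of_lt_one hσ0 h11
  obtain ⟨m2, hm2⟩ := exists_pow_lt_of_lt_one hσ0 (show 1 - y₂ < 1 by linarith)
  obtain ⟨n₀, hn₀1, hn₀2⟩ : ∃ n₀ : ℕ, y₁^n₀ ≤ σ ∧ (1-y₂)^n₀ ≤ σ :=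
    ⟨max m1 m2,
      le_trans (pow_le_pow_of_le_one h01.le h11.le (le_max_left _ _)) hm1.le,
      le_trans (pow_le_pow_of_le_one (by linarith) (by linarith) (le_max_right _ _)) hm2.le⟩
  -- generic hypotheses for the key lemmas, at stage m ≥ n₀
  have stage : ∀ m : ℕ, n₀ ≤ m →
      0 ≤ y₁^m*δ ∧ (1-(1-y₂)^m*δ) ≤ 1 ∧ y₁^m*δ ≤ σ ∧
        y₁*(1-(1-(1-y₂)^m*δ)) ≤ σ ∧ (1-y₂)*(1-(1-(1-y₂)^m*δ)) ≤ σ ∧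
        y₂ + (1-y₂)*(y₁^m*δ) ≤ y₁*(1-(1-y₂)^m*δ) := by
    intro m hm
    have hpy : y₁^m ≤ 1 := pow_le_one₀ h01.le h11.le
    have hpz : (1-y₂)^m ≤ 1 := pow_le_one₀ (by linarith) (by linarith)
    have hpy0 : 0 < y₁^m := pow_pos h01 m
    have hpz0 : 0 < (1-y₂)^m := pow_pos (by linarith) m
    have hmy : y₁^m ≤ y₁^n₀ := pow_le_pow_of_le_one h01.le h11.le hm
    have hmz : (1-y₂)^m ≤ (1-y₂)^n₀ :=
      pow_le_pow_of_le_one (by linarith) (by linarith) hm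
    have hd1 : y₁^m*δ ≤ y₁^m := mul_le_of_le_one_right hpy0.le hδ1
    have hd2 : (1-y₂)^m*δ ≤ (1-y₂)^m := mul_le_of_le_one_right hpz0.le hδ1
    have g3 : y₁^m*δ ≤ σ := le_trans hd1 (le_trans hmy hn₀1)
    have g4 : (1-y₂)^m*δ ≤ σ := le_trans hd2 (le_trans hmz hn₀2)
    have e1 : y₁^m*δ ≤ δ := mul_le_of_le_one_left hδ0.le hpy
    have e2 : (1-y₂)^m*δ ≤ δ := mul_le_of_le_one_left hδ0.le hpz
    have c1 : (1-y₂)*(y₁^m*δ) ≤ (1-y₂)*δ :=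
      mul_le_mul_of_nonneg_left e1 (by linarith)
    have c2 : y₁*((1-y₂)^m*δ) ≤ y₁*δ := mul_le_mul_of_nonneg_left e2 h01.le
    have c3 : y₁*((1-y₂)^m*δ) ≤ (1-y₂)^m*δ :=
      mul_le_of_le_one_left (by positivity) h11.le
    have c4 : (1-y₂)*((1-y₂)^m*δ) ≤ (1-y₂)^m*δ :=
      mul_le_of_le_one_left (by positivity) (by linarith)
    have hmd : 0 < (1-y₂)^m*δ := by positivity
    refine ⟨by positivity, by linarith, g3, by linarith, by linarith, by linarith⟩
  -- the main claim: double coverage propagates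
  have claim : ∀ kk x,
      pind (y₁^(n₀+1+kk)*δ) (1-(1-y₂)^(n₀+1+kk)*δ) x
        + pind (y₁^kk*(y₂+σ)) (1-(1-y₂)^kk*(1-y₁+σ)) x
        ≤ (zipS y₁ y₂)^[n₀+1+kk] (pind δ (1-δ)) x := by
    intro kk
    induction kk with
    | zero =>
      intro x
      obtain ⟨ha0, hb1, haσ, hbσ, hbσ', hconn⟩ := stage n₀ le_rfl
      have hstep : zipS y₁ y₂ (pind (y₁^n₀*δ) (1-(1-y₂)^n₀*δ)) x ≤
          (zipS y₁ y₂)^[n₀+1+0] (pind δ (1-δ)) x := by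
        have h : n₀ + 1 + 0 = n₀ + 1 := by ring
        rw [h, Function.iterate_succ_apply']
        exact zipS_mono (full n₀) x
      refine le_trans ?_ hstep
      rw [zipS_pind h01 h21]
      have e1 : y₁^(n₀+1+0)*δ = y₁*(y₁^n₀*δ) := by ring
      have e2 : (1:ℝ)-(1-y₂)^(n₀+1+0)*δ = y₂+(1-y₂)*(1-(1-y₂)^n₀*δ) := by ring
      have e3 : y₁^0*(y₂+σ) = y₂+σ := by ring
      have e4 : (1:ℝ)-(1-y₂)^0*(1-y₁+σ) = y₁-σ := by ring
      rw [e1, e2, e3, e4]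
      exact key_base h01 h11 h02 h21 hσ0 ha0 hb1 haσ hbσ hbσ' hconn x
    | succ kk ih =>
      intro x
      obtain ⟨ha0, hb1, haσ, hbσ, hbσ', hconn⟩ := stage (n₀+1+kk) (by omega)
      have hpyk : y₁^kk ≤ 1 := pow_le_one₀ h01.le h11.le
      have hpzk : (1-y₂)^kk ≤ 1 := pow_le_one₀ (by linarith) (by linarith)
      have hstep : zipS y₁ y₂ (fun z => pind (y₁^(n₀+1+kk)*δ) (1-(1-y₂)^(n₀+1+kk)*δ) z
            + pind (y₁^kk*(y₂+σ)) (1-(1-y₂)^kk*(1-y₁+σ)) z) x ≤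
          (zipS y₁ y₂)^[n₀+1+(kk+1)] (pind δ (1-δ)) x := by
        have h : n₀ + 1 + (kk+1) = (n₀+1+kk) + 1 := by ring
        rw [h, Function.iterate_succ_apply']
        exact zipS_mono ih x
      refine le_trans ?_ hstep
      have hsplit : zipS y₁ y₂ (fun z => pind (y₁^(n₀+1+kk)*δ) (1-(1-y₂)^(n₀+1+kk)*δ) z
            + pind (y₁^kk*(y₂+σ)) (1-(1-y₂)^kk*(1-y₁+σ)) z) x =
          zipS y₁ y₂ (pind (y₁^(n₀+1+kk)*δ) (1-(1-y₂)^(n₀+1+kk)*δ)) x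
            + zipS y₁ y₂ (pind (y₁^kk*(y₂+σ)) (1-(1-y₂)^kk*(1-y₁+σ))) x := by
        unfold zipS; ring
      rw [hsplit, zipS_pind h01 h21, zipS_pind h01 h21]
      have e1 : y₁^(n₀+1+(kk+1))*δ = y₁*(y₁^(n₀+1+kk)*δ) := by ring
      have e2 : (1:ℝ)-(1-y₂)^(n₀+1+(kk+1))*δ
          = y₂+(1-y₂)*(1-(1-y₂)^(n₀+1+kk)*δ) := by ring
      have e3 : y₁^(kk+1)*(y₂+σ) = y₁*(y₁^kk*(y₂+σ)) := by ring
      have e4 : (1:ℝ)-(1-y₂)^(kk+1)*(1-y₁+σ)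
          = y₂+(1-y₂)*(1-(1-y₂)^kk*(1-y₁+σ)) := by ring
      rw [e1, e2, e3, e4]
      apply key_step h01 h11 h02 h21 hσ0 hσI hσ1 hσ2 ha0 hb1 haσ hbσ hconn
      · positivity
      · exact mul_le_of_le_one_left (by linarith) hpyk
      · have : (1-y₂)^kk*(1-y₁+σ) ≤ 1-y₁+σ :=
          mul_le_of_le_one_left (by linarith) hpzk
        linarith
      · have : (0:ℝ) ≤ (1-y₂)^kk*(1-y₁+σ) :=
          mul_nonneg (pow_nonneg (by linarith) kk) (by linarith)
        linarith
  -- choose K so that the middle interval swallows [δ, 1-δ]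
  obtain ⟨q1, hq1⟩ := exists_pow_lt_of_lt_one hδ0 h11
  obtain ⟨q2, hq2⟩ := exists_pow_lt_of_lt_one hδ0 (show 1 - y₂ < 1 by linarith)
  obtain ⟨K, hK1, hK2⟩ : ∃ K : ℕ, y₁^K ≤ δ ∧ (1-y₂)^K ≤ δ :=
    ⟨max q1 q2,
      le_trans (pow_le_pow_of_le_one h01.le h11.le (le_max_left _ _)) hq1.le,
      le_trans (pow_le_pow_of_le_one (by linarith) (by linarith) (le_max_right _ _)) hq2.le⟩
  -- doubling
  have hdouble : ∀ x, 2 * pind δ (1-δ) x ≤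
      (zipS y₁ y₂)^[n₀+1+K] (pind δ (1-δ)) x := by
    intro x
    have h1 := claim K x
    have hpyM : y₁^(n₀+1+K) ≤ 1 := pow_le_one₀ h01.le h11.le
    have hpzM : (1-y₂)^(n₀+1+K) ≤ 1 := pow_le_one₀ (by linarith) (by linarith)
    have c1 : pind δ (1-δ) x ≤ pind (y₁^(n₀+1+K)*δ) (1-(1-y₂)^(n₀+1+K)*δ) x := by
      apply pind_mono
      · exact mul_le_of_le_one_left hδ0.le hpyM
      · have := mul_le_of_le_one_left hδ0.le hpzM
        linarith
    have c2 : pind δ (1-δ) x ≤ pind (y₁^K*(y₂+σ)) (1-(1-y₂)^K*(1-y₁+σ)) x := by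
      apply pind_mono
      · have h3 : y₁^K*(y₂+σ) ≤ y₁^K :=
          mul_le_of_le_one_right (by positivity) (by linarith)
        linarith
      · have h4 : (1-y₂)^K*(1-y₁+σ) ≤ (1-y₂)^K :=
          mul_le_of_le_one_right (pow_nonneg (by linarith) K) (by linarith)
        linarith
    linarith
  -- iterate the doubling
  have iter : ∀ j x, (2:ℝ)^j * pind δ (1-δ) x ≤
      (zipS y₁ y₂)^[(n₀+1+K)*j] (pind δ (1-δ)) x := by
    intro j
    induction j with
    | zero => intro x; simp
    | succ j ihj =>
      intro x
      have hM : (n₀+1+K)*(j+1) = (n₀+1+K) + (n₀+1+K)*j := by ring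
      rw [hM, Function.iterate_add_apply]
      have step1 : (zipS y₁ y₂)^[n₀+1+K] (fun z => (2:ℝ)^j * pind δ (1-δ) z) x ≤
          (zipS y₁ y₂)^[n₀+1+K] ((zipS y₁ y₂)^[(n₀+1+K)*j] (pind δ (1-δ))) x :=
        zipS_iter_mono _ ihj x
      have step2 : (zipS y₁ y₂)^[n₀+1+K] (fun z => (2:ℝ)^j * pind δ (1-δ) z) x =
          (2:ℝ)^j * (zipS y₁ y₂)^[n₀+1+K] (pind δ (1-δ)) x := by
        rw [zipS_iter_smul]
      have step3 : (2:ℝ)^j * (2 * pind δ (1-δ) x) ≤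
          (2:ℝ)^j * (zipS y₁ y₂)^[n₀+1+K] (pind δ (1-δ)) x :=
        mul_le_mul_of_nonneg_left (hdouble x) (by positivity)
      calc (2:ℝ)^(j+1) * pind δ (1-δ) x
          = (2:ℝ)^j * (2 * pind δ (1-δ) x) := by ring
        _ ≤ (2:ℝ)^j * (zipS y₁ y₂)^[n₀+1+K] (pind δ (1-δ)) x := step3
        _ = (zipS y₁ y₂)^[n₀+1+K] (fun z => (2:ℝ)^j * pind δ (1-δ) z) x := step2.symm
        _ ≤ _ := step1
  -- choose j with k ≤ 2^j
  obtain ⟨j, hj⟩ := pow_unbounded_of_one_lt (y := (2:ℝ)) k (by norm_num)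
  refine ⟨δ, hδ0, (n₀+1+K)*j, ?_⟩
  intro x
  have h1 := iter j x
  have h2 : k * indicator (Icc ε (1-ε)) (fun _ => (1:ℝ)) x ≤
      (2:ℝ)^j * pind δ (1-δ) x := by
    by_cases hx : x ∈ Icc ε (1-ε)
    · rw [indicator_of_mem hx]
      have hxδ : x ∈ Icc δ (1-δ) := by
        rw [mem_Icc] at hx ⊢
        constructor <;> linarith [hx.1, hx.2]
      have hp : pind δ (1-δ) x = 1 := by rw [pind_apply, if_pos hxδ]
      rw [hp]
      simpa using hj.le
    · rw [indicator_of_notMem hx, mul_zero]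
      exact mul_nonneg (pow_nonneg (by norm_num) j) (pind_nonneg δ (1-δ) x)
  exact le_trans h2 h1
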